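/- C⁰ convergence of iterated involutes: under the iteration α_i(θ) = -½∫_θ^{θ+π} β_i[v,v']ds, β_{i+1}(θ) = ½∫_θ^{θ+π} α_i[u,u']ds, if ∫₀^π α_i²[u,u']dθ → 0 then the sup norms ‖β_{i+1}‖_∞ → 0 and ‖α_{i+1}‖_∞ → 0; in particular the sup norm bound ‖β_{i+1}‖_∞ ≤ ½√(A(u)·∫₀^π α_i²·(2/A(u))[u,u']dθ·A(u)) holds via the Cauchy–Schwarz inequality ∫₀^π|α_i|[u,u']dθ ≤ (A(u)∫₀^π α_i²[u,u']dθ)^{1/2} where A(u) = ∫₀^π[u,u']dθ. -/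

import Mathlib

/-!
Differentiating `u(θ + π) = -u(θ)` shows that `u'` is antiperiodic too, so `[u,u']` is `π`-periodic
and so is `|α_i| [u,u']`. Hence the bound `|β_{i+1}(θ)| ≤ ½ ∫_θ^{θ+π} |α_i| [u,u']` does not
depend on `θ`: its right side is `½ ∫_0^π |α_i| [u,u']`, which Cauchy–Schwarz for the weight
`[u,u']` bounds by the weighted `L²` norm of `α_i`, and this tends to `0`. Feeding the uniform bound
into the recursion gives `‖α_{i+1}‖_∞ ≤ ½ ‖β_{i+1}‖_∞ ∫_0^π [v,v']`.
-/

open Real Filter MeasureTheory intervalIntegral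

/-- Determinant of two plane vectors. -/
noncomputable def det2 (w₁ w₂ : ℝ × ℝ) : ℝ := w₁.1 * w₂.2 - w₁.2 * w₂.1

lemma det2_neg_neg (w₁ w₂ : ℝ × ℝ) : det2 (-w₁) (-w₂) = det2 w₁ w₂ := by
  simp only [det2, Prod.fst_neg, Prod.snd_neg]; ring

lemma Continuous.det2 {X : Type*} [TopologicalSpace X] {f g : X → ℝ × ℝ}
    (hf : Continuous f) (hg : Continuous g) : Continuous fun x => _root_.det2 (f x) (g x) := by
  unfold _root_.det2; fun_prop

namespace Function

lemma Antiperiodic.hasDerivAt_antiperiodic {E : Type*} [NormedAddCommGroup E] [NormedSpace ℝ E]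
    {f f' : ℝ → E} {c : ℝ} (hf : Antiperiodic f c) (hf' : ∀ x, HasDerivAt f (f' x) x) :
    Antiperiodic f' c := fun x => by
  have hshift : HasDerivAt (fun y => f (y + c)) (f' (x + c)) x := (hf' (x + c)).comp_add_const x c
  rw [hf.funext] at hshift
  exact hshift.unique (hf' x).neg

lemma Antiperiodic.periodic_det2 {u u' : ℝ → ℝ × ℝ} {c : ℝ} (hu : Antiperiodic u c)
    (hu' : Antiperiodic u' c) : Periodic (fun s => det2 (u s) (u' s)) c := fun s => by
  simp only [hu s, hu' s, det2_neg_neg]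

end Function

namespace intervalIntegral

theorem integral_abs_mul_le_sqrt {f D : ℝ → ℝ} {a b : ℝ} (hab : a ≤ b)
    (hD : ∀ s ∈ Set.Icc a b, 0 ≤ D s) (hDi : IntervalIntegrable D volume a b)
    (hfD : IntervalIntegrable (fun s => |f s| * D s) volume a b)
    (hf2D : IntervalIntegrable (fun s => f s ^ 2 * D s) volume a b) :
    ∫ s in a..b, |f s| * D s ≤ √((∫ s in a..b, D s) * ∫ s in a..b, f s ^ 2 * D s) := by
  set A := ∫ s in a..b, D s
  set I := ∫ s in a..b, |f s| * D s
  set J := ∫ s in a..b, f s ^ 2 * D s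
  have hquad : ∀ t : ℝ, 0 ≤ A * (t * t) + (-2 * I) * t + J := fun t => by
    have hexpand : ∀ s, (t - |f s|) ^ 2 * D s
        = t * t * D s + (-2 * t) * (|f s| * D s) + f s ^ 2 * D s := fun s => by
      rw [← sq_abs (f s)]; ring
    have hint : ∫ s in a..b, (t - |f s|) ^ 2 * D s = A * (t * t) + (-2 * I) * t + J := by
      simp_rw [hexpand]
      rw [integral_add ((hDi.const_mul _).add (hfD.const_mul _)) hf2D,
        integral_add (hDi.const_mul _) (hfD.const_mul _), integral_const_mul, integral_const_mul]
      ring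
    exact hint ▸ integral_nonneg hab fun s hs => mul_nonneg (sq_nonneg _) (hD s hs)
  have hdisc := discrim_le_zero hquad
  rw [discrim] at hdisc
  exact Real.le_sqrt_of_sq_le (by linarith)

theorem abs_integral_le_of_periodic {g G : ℝ → ℝ} {c : ℝ} (hc : 0 ≤ c)
    (hG : Function.Periodic G c) (hGc : Continuous G) (hgG : ∀ s, |g s| ≤ G s) (θ : ℝ) :
    |∫ s in θ..θ + c, g s| ≤ ∫ s in 0..c, G s := by
  have hshift : ∫ s in θ..θ + c, G s = ∫ s in 0..c, G s := by
    simpa using hG.intervalIntegral_add_eq θ 0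
  rw [← hshift]
  exact norm_integral_le_of_norm_le (by linarith)
    (ae_of_all _ fun s _ => (norm_eq_abs (g s)).trans_le (hgG s)) (hGc.intervalIntegrable _ _)

theorem abs_integral_mul_le_of_antiperiodic {f D : ℝ → ℝ} {c : ℝ} (hc : 0 ≤ c)
    (hf : Continuous f) (hfa : Function.Antiperiodic f c) (hD : Continuous D)
    (hDp : Function.Periodic D c) (hDnn : ∀ s, 0 ≤ D s) (θ : ℝ) :
    |∫ s in θ..θ + c, f s * D s| ≤ ∫ s in 0..c, |f s| * D s := by
  refine abs_integral_le_of_periodic (G := fun s => |f s| * D s) hc (fun s => ?_) (hf.abs.mul hD)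
    (fun s => ?_) θ
  · simp only [hfa s, abs_neg, hDp s]
  · rw [abs_mul, abs_of_nonneg (hDnn s)]

theorem abs_integral_mul_le_of_periodic {g D : ℝ → ℝ} {c M : ℝ} (hc : 0 ≤ c)
    (hD : Continuous D) (hDp : Function.Periodic D c) (hDnn : ∀ s, 0 ≤ D s)
    (hg : ∀ s, |g s| ≤ M) (θ : ℝ) :
    |∫ s in θ..θ + c, g s * D s| ≤ M * ∫ s in 0..c, D s := by
  rw [← integral_const_mul]
  refine abs_integral_le_of_periodic (G := fun s => M * D s) hc (fun s => congrArg (M * ·) (hDp s))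
    (continuous_const.mul hD) (fun s => ?_) θ
  rw [abs_mul, abs_of_nonneg (hDnn s)]
  exact mul_le_mul_of_nonneg_right (hg s) (hDnn s)

end intervalIntegral

lemma forall_abs_lt_of_abs_le_of_tendsto_zero {X : Type*} {f : ℕ → X → ℝ} {b : ℕ → ℝ}
    (hfb : ∀ i x, |f i x| ≤ b i) (hb : Tendsto b atTop (nhds 0)) :
    ∀ ε > (0 : ℝ), ∃ N : ℕ, ∀ i ≥ N, ∀ x, |f i x| < ε := fun ε hε => by
  obtain ⟨N, hN⟩ := eventually_atTop.mp (hb.eventually (gt_mem_nhds hε))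
  exact ⟨N, fun i hi x => (hfb i x).trans_lt (hN i hi)⟩

theorem iterated_involutes_C0_convergence_general (u u' v v' : ℝ → ℝ × ℝ)
    (α β : ℕ → ℝ → ℝ)
    (hu : ∀ θ, HasDerivAt u (u' θ) θ)
    (hv : ∀ θ, HasDerivAt v (v' θ) θ)
    (husym : ∀ θ, u (θ + π) = -u θ)
    (hvsym : ∀ θ, v (θ + π) = -v θ)
    (hudet : ∀ θ, 0 < det2 (u θ) (u' θ))
    (hvdet : ∀ θ, 0 < det2 (v θ) (v' θ))
    (hcontu' : Continuous u')
    (hcontv' : Continuous v')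
    (hcontα : ∀ i, Continuous (α i))
    (hαanti : ∀ i θ, α i (θ + π) = -α i θ)
    (hrecα : ∀ i θ, α i θ
      = -(1/2 : ℝ) * ∫ s in θ..(θ + π), β i s * det2 (v s) (v' s))
    (hrecβ : ∀ i θ, β (i + 1) θ
      = (1/2 : ℝ) * ∫ s in θ..(θ + π), α i s * det2 (u s) (u' s))
    (hαto0 : Tendsto (fun i => ∫ θ in (0:ℝ)..π, (α i θ) ^ 2 * det2 (u θ) (u' θ))
      atTop (nhds 0)) :
    (∀ i θ, |β (i + 1) θ| ≤ (1/2 : ℝ) *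
        Real.sqrt ((∫ s in (0:ℝ)..π, det2 (u s) (u' s)) *
          ∫ s in (0:ℝ)..π, (α i s) ^ 2 * det2 (u s) (u' s))) ∧
    (∀ i, ∫ s in (0:ℝ)..π, |α i s| * det2 (u s) (u' s) ≤
        Real.sqrt ((∫ s in (0:ℝ)..π, det2 (u s) (u' s)) *
          ∫ s in (0:ℝ)..π, (α i s) ^ 2 * det2 (u s) (u' s))) ∧
    (∀ ε > (0:ℝ), ∃ N : ℕ, ∀ i ≥ N, ∀ θ : ℝ, |β (i + 1) θ| < ε) ∧
    (∀ ε > (0:ℝ), ∃ N : ℕ, ∀ i ≥ N, ∀ θ : ℝ, |α (i + 1) θ| < ε) := by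
  have hu_anti : Function.Antiperiodic u π := husym
  have hv_anti : Function.Antiperiodic v π := hvsym
  have hDu_per := hu_anti.periodic_det2 (hu_anti.hasDerivAt_antiperiodic hu)
  have hDv_per := hv_anti.periodic_det2 (hv_anti.hasDerivAt_antiperiodic hv)
  have hDu_cont : Continuous fun s => det2 (u s) (u' s) :=
    (continuous_iff_continuousAt.2 fun θ => (hu θ).continuousAt).det2 hcontu'
  have hDv_cont : Continuous fun s => det2 (v s) (v' s) :=
    (continuous_iff_continuousAt.2 fun θ => (hv θ).continuousAt).det2 hcontv'
  have hCS : ∀ i, ∫ s in (0:ℝ)..π, |α i s| * det2 (u s) (u' s) ≤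
      √((∫ s in (0:ℝ)..π, det2 (u s) (u' s)) *
        ∫ s in (0:ℝ)..π, (α i s) ^ 2 * det2 (u s) (u' s)) := fun i =>
    integral_abs_mul_le_sqrt pi_pos.le (fun s _ => (hudet s).le)
      (hDu_cont.intervalIntegrable _ _) (((hcontα i).abs.mul hDu_cont).intervalIntegrable _ _)
      ((((hcontα i).pow 2).mul hDu_cont).intervalIntegrable _ _)
  set bound : ℕ → ℝ := fun i => (1/2 : ℝ) * √((∫ s in (0:ℝ)..π, det2 (u s) (u' s)) *
    ∫ s in (0:ℝ)..π, (α i s) ^ 2 * det2 (u s) (u' s))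
  have hβ_le : ∀ i θ, |β (i + 1) θ| ≤ bound i := fun i θ => by
    rw [hrecβ, abs_mul, abs_of_pos one_half_pos]
    exact mul_le_mul_of_nonneg_left ((abs_integral_mul_le_of_antiperiodic pi_pos.le (hcontα i)
      (hαanti i) hDu_cont hDu_per (fun s => (hudet s).le) θ).trans (hCS i)) one_half_pos.le
  have hα_le : ∀ i θ,
      |α (i + 1) θ| ≤ (1/2 : ℝ) * (bound i * ∫ s in (0:ℝ)..π, det2 (v s) (v' s)) := fun i θ => by
    rw [hrecα, abs_mul, abs_neg, abs_of_pos one_half_pos]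
    exact mul_le_mul_of_nonneg_left (abs_integral_mul_le_of_periodic pi_pos.le hDv_cont hDv_per
      (fun s => (hvdet s).le) (hβ_le i) θ) one_half_pos.le
  have hbound : Tendsto bound atTop (nhds 0) := by
    simpa [bound] using ((hαto0.const_mul _).sqrt).const_mul (1/2 : ℝ)
  refine ⟨hβ_le, hCS, forall_abs_lt_of_abs_le_of_tendsto_zero hβ_le hbound,
    forall_abs_lt_of_abs_le_of_tendsto_zero hα_le ?_⟩
  simpa using (hbound.mul_const _).const_mul (1/2 : ℝ)

/-- C⁰ convergence of iterated involutes: if ∫₀^π α_i²[u,u'] → 0 (and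
∫₀^π β_i²[v,v'] → 0) then ‖β_{i+1}‖_∞ → 0 and ‖α_{i+1}‖_∞ → 0, with the
Cauchy–Schwarz sup-norm bound |β_{i+1}(θ)| ≤ ½√(A(u)·∫₀^π α_i²[u,u']) where
A(u) = ∫₀^π [u,u']. -/
theorem iterated_involutes_C0_convergence (u u' v v' : ℝ → ℝ × ℝ)
    (α β : ℕ → ℝ → ℝ)
    (hu : ∀ θ, HasDerivAt u (u' θ) θ)
    (hv : ∀ θ, HasDerivAt v (v' θ) θ)
    (husym : ∀ θ, u (θ + π) = -u θ)
    (hvsym : ∀ θ, v (θ + π) = -v θ)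
    (hudet : ∀ θ, 0 < det2 (u θ) (u' θ))
    (hvdet : ∀ θ, 0 < det2 (v θ) (v' θ))
    (hcontu : Continuous u) (hcontu' : Continuous u')
    (hcontv : Continuous v) (hcontv' : Continuous v')
    (hcontα : ∀ i, Continuous (α i)) (hcontβ : ∀ i, Continuous (β i))
    (hαanti : ∀ i θ, α i (θ + π) = -α i θ)
    (hβanti : ∀ i θ, β i (θ + π) = -β i θ)
    (hrecα : ∀ i θ, α i θ
      = -(1/2 : ℝ) * ∫ s in θ..(θ + π), β i s * det2 (v s) (v' s))
    (hrecβ : ∀ i θ, β (i + 1) θ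
      = (1/2 : ℝ) * ∫ s in θ..(θ + π), α i s * det2 (u s) (u' s))
    (hαto0 : Tendsto (fun i => ∫ θ in (0:ℝ)..π, (α i θ) ^ 2 * det2 (u θ) (u' θ))
      atTop (nhds 0))
    (hβto0 : Tendsto (fun i => ∫ θ in (0:ℝ)..π, (β i θ) ^ 2 * det2 (v θ) (v' θ))
      atTop (nhds 0)) :
    (∀ i θ, |β (i + 1) θ| ≤ (1/2 : ℝ) *
        Real.sqrt ((∫ s in (0:ℝ)..π, det2 (u s) (u' s)) *
          ∫ s in (0:ℝ)..π, (α i s) ^ 2 * det2 (u s) (u' s))) ∧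
    (∀ i, ∫ s in (0:ℝ)..π, |α i s| * det2 (u s) (u' s) ≤
        Real.sqrt ((∫ s in (0:ℝ)..π, det2 (u s) (u' s)) *
          ∫ s in (0:ℝ)..π, (α i s) ^ 2 * det2 (u s) (u' s))) ∧
    (∀ ε > (0:ℝ), ∃ N : ℕ, ∀ i ≥ N, ∀ θ : ℝ, |β (i + 1) θ| < ε) ∧
    (∀ ε > (0:ℝ), ∃ N : ℕ, ∀ i ≥ N, ∀ θ : ℝ, |α (i + 1) θ| < ε) :=
  iterated_involutes_C0_convergence_general u u' v v' α β hu hv husym hvsym hudet hvdet hcontu'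
    hcontv' hcontα hαanti hrecα hrecβ hαto0
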